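/- arXiv:1403.0519 — 2 statements merged into one kernel-verified Lean document; each statement's English description precedes it below -/
import Mathlib

section
/- Let n be a positive integer and let F, G : ℝ → ℝ be functions that are n times continuously differentiable (F on a neighborhood of x, G on a neighborhood of F(x)). Then the n-th derivative of the composite G ∘ F at x is given by Faà di Bruno's formula: d^n/dx^n (G ∘ F)(x) = Σ (n!/(k₁!·k₂!···k_n!)) · G^{(r)}(F(x)) · ∏_{i=1}^{n} (F^{(i)}(x)/i!)^{k_i}, where the sum ranges over all tuples (k₁,…,k_n) of nonnegative integers satisfying k₁ + 2k₂ + ⋯ + n·k_n = n, and r = k₁ + ⋯ + k_n. -/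
/-!
Mathlib's Faà di Bruno formula writes `(G ∘ F)⁽ⁿ⁾(x)` as a sum, over the ordered finpartitions of
`Fin n` (set partitions with a canonical order on the blocks), of `G⁽ˡ⁾(F x) · ∏ F⁽ˢ⁾(x)`, with `l`
the number of blocks and `s` running over the block sizes. Grouping the partitions by their
multiset of block sizes leaves a count: there are `Multiset.bell m = n! / ∏ᵢ (i!^kᵢ · kᵢ!)`
partitions of `Fin n` with `kᵢ` blocks of size `i`. This is proved by induction on `n` along
`OrderedFinpartition.extendEquiv`, which obtains each partition of `Fin (n + 1)` exactly once by
adding a new point to a partition of `Fin n`, either as a singleton block or inside one of its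
blocks. A partition with block sizes `q` thus arises from a block of size `j - 1` growing to size
`j`, for some `j ∈ q`; `Multiset.bell` satisfies the resulting recursion because
`∑ⱼ j · (number of parts of q equal to j) = n + 1`.
-/

open scoped Nat
open Finset

namespace Multiset

variable {α : Type*} [DecidableEq α]

lemma cons_erase_eq_iff {m q : Multiset α} {a b : α} (ha : a ∈ m) :
    b ::ₘ m.erase a = q ↔ b ∈ q ∧ m = a ::ₘ q.erase b := by
  constructor
  · rintro rfl
    simp [cons_erase ha]
  · rintro ⟨hb, rfl⟩
    rw [erase_cons_head, cons_erase hb]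

lemma cons_eq_iff_eq_erase {m q : Multiset α} {b : α} :
    b ::ₘ m = q ↔ b ∈ q ∧ m = q.erase b := by
  constructor
  · rintro rfl
    simp
  · rintro ⟨hb, rfl⟩
    exact cons_erase hb

lemma map_univ_val_update {β : Type*} [Fintype α] [DecidableEq β] (f : α → β) (k : α)
    (b : β) :
    univ.val.map (Function.update f k b) = b ::ₘ (univ.val.map f).erase (f k) := by
  have h : (univ : Finset α).val = k ::ₘ (univ.erase k).val := by
    rw [erase_val, cons_erase (mem_univ k)]
  rw [h, map_cons, map_cons, erase_cons_head, Function.update_self]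
  congr 1
  exact map_congr rfl fun i hi => Function.update_of_ne (mem_erase.1 hi).1 _ _

def shrinkPart (q : Multiset ℕ) (j : ℕ) : Multiset ℕ :=
  if j = 1 then q.erase 1 else (j - 1) ::ₘ q.erase j

variable {q m : Multiset ℕ} {j s : ℕ}

lemma zero_notMem_shrinkPart (hq : 0 ∉ q) (hj : j ≠ 0) : 0 ∉ q.shrinkPart j := by
  unfold shrinkPart
  split_ifs with h1
  · exact fun h => hq (mem_of_mem_erase h)
  · exact fun h => (mem_cons.1 h).elim (by omega) fun h => hq (mem_of_mem_erase h)

lemma sum_shrinkPart (hj : j ∈ q) (hj0 : j ≠ 0) : (q.shrinkPart j).sum + 1 = q.sum := by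
  conv_rhs => rw [← cons_erase hj, sum_cons]
  unfold shrinkPart
  split_ifs with h1
  · subst h1
    ring
  · rw [sum_cons]
    omega

lemma succ_cons_erase_eq_iff (hm : 0 ∉ m) (hs : s ∈ 0 ::ₘ m) :
    (s + 1) ::ₘ m.erase s = q ↔ s + 1 ∈ q ∧ m = q.shrinkPart (s + 1) := by
  rcases eq_or_ne s 0 with rfl | hs0
  · rw [erase_of_notMem hm]
    exact cons_eq_iff_eq_erase
  · rw [cons_erase_eq_iff ((mem_cons.1 hs).resolve_left hs0), shrinkPart, if_neg (by omega),
      Nat.add_sub_cancel]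

def bellDenominator (m : Multiset ℕ) : ℕ :=
  (m.map (· !)).prod * ∏ j ∈ m.toFinset.erase 0, (m.count j)!

lemma bell_mul_bellDenominator (m : Multiset ℕ) : m.bell * m.bellDenominator = m.sum ! := by
  rw [bellDenominator, ← mul_assoc, bell_mul_eq]

lemma bellDenominator_pos (m : Multiset ℕ) : 0 < m.bellDenominator := by
  refine Nat.mul_pos (prod_pos fun j hj => ?_) (Finset.prod_pos fun j _ => Nat.factorial_pos _)
  obtain ⟨i, -, rfl⟩ := mem_map.1 hj
  exact Nat.factorial_pos i

lemma bellDenominator_cons {a : ℕ} (ha : a ≠ 0) (m : Multiset ℕ) :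
    (a ::ₘ m).bellDenominator = a ! * (m.count a + 1) * m.bellDenominator := by
  set S := insert a (m.toFinset.erase 0)
  have hS : ∀ m' : Multiset ℕ, m'.toFinset.erase 0 ⊆ S →
      ∏ j ∈ m'.toFinset.erase 0, (m'.count j)! = ∏ j ∈ S, (m'.count j)! := by
    refine fun m' h => prod_subset h fun j hjS hj => ?_
    rw [count_eq_zero_of_notMem fun hm => hj (mem_erase.2 ⟨?_, mem_toFinset.2 hm⟩),
      Nat.factorial_zero]
    rintro rfl
    exact (mem_insert.1 hjS).elim (fun h => ha h.symm) fun h => (mem_erase.1 h).1 rfl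
  have haS : a ∈ S := mem_insert_self _ _
  rw [bellDenominator, bellDenominator, hS _ (by rw [toFinset_cons, erase_insert_of_ne ha]),
    hS _ (subset_insert _ _), ← mul_prod_erase _ _ haS, ← mul_prod_erase S _ haS,
    map_cons, prod_cons, count_cons_self, Nat.factorial_succ,
    prod_congr rfl fun j hj => by rw [count_cons_of_ne (ne_of_mem_erase hj)]]
  ring

lemma bellDenominator_mul_count_shrinkPart (hq : 0 ∉ q) (hj : j ∈ q) :
    q.bellDenominator * (0 ::ₘ q.shrinkPart j).count (j - 1) =
      j * q.count j * (q.shrinkPart j).bellDenominator := by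
  have hj0 : j ≠ 0 := fun h => hq (h ▸ hj)
  obtain ⟨E, rfl⟩ : ∃ E, q = j ::ₘ E := ⟨q.erase j, (cons_erase hj).symm⟩
  have hE : 0 ∉ E := fun h => hq (mem_cons_of_mem h)
  rw [shrinkPart, bellDenominator_cons hj0, count_cons_self]
  split_ifs with h1
  · subst h1
    rw [erase_cons_head, count_cons_self, count_eq_zero_of_notMem hE]
    ring
  · rw [erase_cons_head, count_cons_of_ne (by omega), count_cons_self,
      bellDenominator_cons (by omega), ← Nat.mul_factorial_pred hj0]
    ring

theorem bell_eq_sum_shrinkPart {n : ℕ} (hq : 0 ∉ q) (hs : q.sum = n + 1) :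
    q.bell =
      ∑ j ∈ q.toFinset, (q.shrinkPart j).bell * (0 ::ₘ q.shrinkPart j).count (j - 1) := by
  refine Nat.eq_of_mul_eq_mul_right (bellDenominator_pos q) ?_
  calc q.bell * q.bellDenominator
      = n ! * ∑ j ∈ q.toFinset, j * q.count j := by
        rw [bell_mul_bellDenominator, hs, Nat.factorial_succ, mul_comm, ← hs, sum_multiset_count]
        simp_rw [smul_eq_mul, mul_comm]
    _ = _ := by
        rw [mul_sum, sum_mul]
        refine sum_congr rfl fun j hj => ?_
        have hj : j ∈ q := mem_toFinset.1 hj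
        have hr : (q.shrinkPart j).sum = n := by
          have := sum_shrinkPart hj (fun h => hq (h ▸ hj)); omega
        rw [mul_assoc, mul_comm (count _ _), bellDenominator_mul_count_shrinkPart hq hj, ← hr,
          ← bell_mul_bellDenominator]
        ring

variable {n : ℕ}

def ofPartCounts (k : Fin n → ℕ) : Multiset ℕ := ∑ i, replicate (k i) (i.val + 1)

variable (k : Fin n → ℕ)

lemma count_ofPartCounts (a : ℕ) :
    (ofPartCounts k).count a = ∑ i, if a = i.val + 1 then k i else 0 := by
  simp_rw [ofPartCounts, count_sum', count_replicate, eq_comm]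

lemma count_succ_ofPartCounts (i : Fin n) : (ofPartCounts k).count (i.val + 1) = k i := by
  rw [count_ofPartCounts, Fintype.sum_eq_single i fun j hj => if_neg (by omega), if_pos rfl]

lemma zero_notMem_ofPartCounts : 0 ∉ ofPartCounts k := by
  rw [← count_eq_zero, count_ofPartCounts]
  simp

lemma card_ofPartCounts : (ofPartCounts k).card = ∑ i, k i := by
  simp [ofPartCounts]

lemma sum_ofPartCounts : (ofPartCounts k).sum = ∑ i, (i.val + 1) * k i := by
  simp [ofPartCounts, sum_sum, mul_comm]

lemma prod_map_ofPartCounts {M : Type*} [CommMonoid M] (v : ℕ → M) :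
    ((ofPartCounts k).map v).prod = ∏ i, v (i.val + 1) ^ k i := by
  rw [ofPartCounts, ← coe_mapAddMonoidHom, map_sum, Multiset.prod_sum]
  simp

lemma eq_ofPartCounts {m : Multiset ℕ} (hm : ∀ a ∈ m, 0 < a ∧ a ≤ n) :
    m = ofPartCounts (n := n) fun i => m.count (i.val + 1) := by
  refine ext' fun a => ?_
  rw [count_ofPartCounts]
  by_cases ha : 0 < a ∧ a ≤ n
  · rw [Fintype.sum_eq_single ⟨a - 1, by omega⟩ fun j hj =>
      if_neg fun h => hj (Fin.ext (by simp; omega))]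
    simp only [Nat.sub_add_cancel ha.1, if_true]
  · rw [count_eq_zero_of_notMem fun h => ha (hm a h)]
    exact (Finset.sum_eq_zero fun j _ => if_neg (by omega)).symm

lemma bellDenominator_ofPartCounts :
    (ofPartCounts k).bellDenominator = (∏ i, (i.val + 1)! ^ k i) * ∏ i, (k i)! := by
  rw [bellDenominator, prod_map_ofPartCounts]
  congr 1
  have hsub : (ofPartCounts k).toFinset.erase 0 ⊆ univ.image fun i : Fin n => i.val + 1 := by
    intro a ha
    obtain ⟨i, -, hi⟩ := mem_sum.1 (mem_toFinset.1 (mem_of_mem_erase ha))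
    exact mem_image.2 ⟨i, mem_univ _, (eq_of_mem_replicate hi).symm⟩
  rw [prod_subset hsub, prod_image fun i _ j _ h => Fin.ext (by simpa using h)]
  · simp_rw [count_succ_ofPartCounts]
  · intro a ha' ha
    obtain ⟨i, -, rfl⟩ := mem_image.1 ha'
    rw [count_eq_zero_of_notMem fun h => ha (mem_erase.2 ⟨by omega, mem_toFinset.2 h⟩),
      Nat.factorial_zero]

end Multiset

namespace OrderedFinpartition

variable {n : ℕ} (c : OrderedFinpartition n)

def partSizes : Multiset ℕ := univ.val.map c.partSize

lemma card_partSizes : c.partSizes.card = c.length := by simp [partSizes]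

lemma sum_partSizes : c.partSizes.sum = n := by
  rw [partSizes, sum_map_val]
  simpa using Fintype.card_congr c.equivSigma

lemma zero_notMem_partSizes : 0 ∉ c.partSizes := by
  simp [partSizes, (c.partSize_pos _).ne']

lemma prod_partSize {M : Type*} [CommMonoid M] (v : ℕ → M) :
    ∏ i, v (c.partSize i) = (c.partSizes.map v).prod := by
  rw [partSizes, Multiset.map_map, prod_map_val]
  rfl

/-- The size in `c` of the block that receives the new point of `c.extend o`; it is `0` when the
new point forms a singleton block. -/
def extendSize (o : Option (Fin c.length)) : ℕ := o.elim 0 c.partSize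

lemma map_univ_val_extendSize : univ.val.map c.extendSize = 0 ::ₘ c.partSizes := by
  rw [univ_option]
  change (none ::ₘ (univ : Finset (Fin c.length)).val.map some).map _ = _
  rw [Multiset.map_cons, Multiset.map_map]
  rfl

lemma partSizes_extend (o : Option (Fin c.length)) :
    (c.extend o).partSizes =
      (c.extendSize o + 1) ::ₘ c.partSizes.erase (c.extendSize o) := by
  cases o with
  | none =>
    rw [extendSize, Option.elim_none, Multiset.erase_of_notMem c.zero_notMem_partSizes, extend_none]
    change univ.val.map (Fin.cons 1 c.partSize : Fin (c.length + 1) → ℕ) = _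
    rw [Fin.univ_succ, cons_val, Multiset.map_cons, map_val, Multiset.map_map]
    rfl
  | some k => exact Multiset.map_univ_val_update _ _ _

lemma card_filter_partSizes_extend {q : Multiset ℕ} (hq : 0 ∉ q) :
    #{o | (c.extend o).partSizes = q} = ∑ j ∈ q.toFinset,
      if c.partSizes = q.shrinkPart j then (0 ::ₘ q.shrinkPart j).count (j - 1) else 0 := by
  have hmem (o : Option (Fin c.length)) : c.extendSize o ∈ 0 ::ₘ c.partSizes := by
    rw [← map_univ_val_extendSize]
    exact Multiset.mem_map_of_mem _ (mem_univ_val o)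
  have hgrow (o : Option (Fin c.length)) : (c.extend o).partSizes = q ↔
      c.extendSize o + 1 ∈ q.toFinset ∧ c.partSizes = q.shrinkPart (c.extendSize o + 1) := by
    rw [partSizes_extend, Multiset.succ_cons_erase_eq_iff c.zero_notMem_partSizes (hmem o),
      Multiset.mem_toFinset]
  rw [filter_congr fun o _ => hgrow o,
    card_eq_sum_card_fiberwise fun o ho => (mem_filter.1 ho).2.1]
  refine sum_congr rfl fun j hj => ?_
  have hj0 : j ≠ 0 := fun h => hq (h ▸ Multiset.mem_toFinset.1 hj)
  split_ifs with h
  · have hfiber (o : Option (Fin c.length)) : ((c.extendSize o + 1 ∈ q.toFinset ∧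
        c.partSizes = q.shrinkPart (c.extendSize o + 1)) ∧ c.extendSize o + 1 = j) ↔
          c.extendSize o = j - 1 := by
      constructor
      · rintro ⟨-, rfl⟩
        rfl
      · intro ho
        rw [ho, Nat.sub_add_cancel (Nat.pos_of_ne_zero hj0)]
        exact ⟨⟨hj, h⟩, rfl⟩
    rw [filter_filter, filter_congr fun o _ => hfiber o, ← h, ← map_univ_val_extendSize,
      Multiset.count_map, card_def, filter_val]
    simp_rw [eq_comm]
  · refine card_eq_zero.2 (filter_eq_empty_iff.2 fun o ho hoj => h ?_)
    rw [← hoj]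
    exact (mem_filter.1 ho).2.2

/-- The factor counts the blocks of size `j - 1` that the new point can join; the extra `0` stands
for the new singleton block when `j = 1`. -/
theorem card_partSizes_succ {q : Multiset ℕ} (hq : 0 ∉ q) :
    #{c : OrderedFinpartition (n + 1) | c.partSizes = q} = ∑ j ∈ q.toFinset,
      #{c : OrderedFinpartition n | c.partSizes = q.shrinkPart j} *
        (0 ::ₘ q.shrinkPart j).count (j - 1) := by
  calc #{c : OrderedFinpartition (n + 1) | c.partSizes = q}
      = ∑ c : OrderedFinpartition n, #{o | (c.extend o).partSizes = q} := by
        simp_rw [card_filter]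
        rw [← (extendEquiv n).sum_comp, Fintype.sum_sigma]
        rfl
    _ = ∑ j ∈ q.toFinset, ∑ c : OrderedFinpartition n,
          if c.partSizes = q.shrinkPart j then (0 ::ₘ q.shrinkPart j).count (j - 1) else 0 := by
        simp_rw [card_filter_partSizes_extend _ hq]
        exact sum_comm
    _ = _ := by
        simp_rw [← sum_filter, sum_const, smul_eq_mul]

theorem card_partSizes_eq_bell {m : Multiset ℕ} (hm : 0 ∉ m) (hs : m.sum = n) :
    #{c : OrderedFinpartition n | c.partSizes = m} = m.bell := by
  induction n generalizing m with
  | zero =>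
    obtain rfl : m = 0 := Multiset.eq_zero_of_forall_notMem fun a ha =>
      hm (Multiset.sum_eq_zero_iff.1 hs a ha ▸ ha)
    have hc (c : OrderedFinpartition 0) : c.partSizes = 0 :=
      Multiset.card_eq_zero.1 (by rw [card_partSizes]; exact Nat.le_zero.1 c.length_le)
    rw [filter_true_of_mem fun c _ => hc c, card_univ, Multiset.bell_zero]
    exact Fintype.card_eq_one_iff.2 ⟨default, fun c => Subsingleton.elim _ _⟩
  | succ n ih =>
    rw [card_partSizes_succ hm, Multiset.bell_eq_sum_shrinkPart hm hs]
    refine sum_congr rfl fun j hj => ?_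
    have hj : j ∈ m := Multiset.mem_toFinset.1 hj
    have hj0 : j ≠ 0 := fun h => hm (h ▸ hj)
    rw [ih (Multiset.zero_notMem_shrinkPart hm hj0)]
    have := Multiset.sum_shrinkPart hj hj0
    omega

def partCounts (i : Fin n) : ℕ := c.partSizes.count (i.val + 1)

lemma partSizes_eq_ofPartCounts : c.partSizes = Multiset.ofPartCounts c.partCounts :=
  Multiset.eq_ofPartCounts fun a ha => by
    obtain ⟨i, -, rfl⟩ := Multiset.mem_map.1 ha
    exact ⟨c.partSize_pos i, c.partSize_le i⟩

lemma partCounts_eq_iff (k : Fin n → ℕ) :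
    c.partCounts = k ↔ c.partSizes = Multiset.ofPartCounts k := by
  constructor
  · rintro rfl
    exact c.partSizes_eq_ofPartCounts
  · intro h
    funext i
    rw [partCounts, h, Multiset.count_succ_ofPartCounts]

theorem card_partCounts_mul {k : Fin n → ℕ} (hk : ∑ i, (i.val + 1) * k i = n) :
    #{c : OrderedFinpartition n | c.partCounts = k} *
      ((∏ i, (i.val + 1)! ^ k i) * ∏ i, (k i)!) = n ! := by
  rw [filter_congr fun c _ => c.partCounts_eq_iff k,
    card_partSizes_eq_bell (Multiset.zero_notMem_ofPartCounts k)
      ((Multiset.sum_ofPartCounts k).trans hk),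
    ← Multiset.bellDenominator_ofPartCounts, Multiset.bell_mul_bellDenominator,
    Multiset.sum_ofPartCounts, hk]

theorem sum_eq_sum_partCounts {K : Type*} [Field K] [CharZero K] (u v : ℕ → K) :
    ∑ c : OrderedFinpartition n, u c.length * ∏ i, v (c.partSize i) =
      ∑ k ∈ (Fintype.piFinset fun _ : Fin n => range (n + 1)).filter
          (fun k : Fin n → ℕ => ∑ i, (i.1 + 1) * k i = n),
        ((n ! : K) / ((∏ i, (k i)! : ℕ) : K)) * u (∑ i, k i) *
          ∏ i, (v (i.1 + 1) / ((i.1 + 1)! : K)) ^ k i := by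
  have hterm (c : OrderedFinpartition n) : u c.length * ∏ i, v (c.partSize i) =
      u (∑ i, c.partCounts i) * ∏ i, v (i.val + 1) ^ c.partCounts i := by
    rw [prod_partSize, ← card_partSizes, c.partSizes_eq_ofPartCounts,
      Multiset.card_ofPartCounts, Multiset.prod_map_ofPartCounts]
  have hmaps (c : OrderedFinpartition n) : c.partCounts ∈
      (Fintype.piFinset fun _ : Fin n => range (n + 1)).filter
        (fun k : Fin n → ℕ => ∑ i, (i.1 + 1) * k i = n) := by
    have hsum : ∑ i, (i.val + 1) * c.partCounts i = n := by
      rw [← Multiset.sum_ofPartCounts, ← c.partSizes_eq_ofPartCounts, sum_partSizes]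
    refine mem_filter.2 ⟨Fintype.mem_piFinset.2 fun i => mem_range.2 ?_, hsum⟩
    have := single_le_sum (fun j _ => Nat.zero_le ((j.val + 1) * c.partCounts j)) (mem_univ i)
    nlinarith
  rw [sum_congr rfl fun c _ => hterm c, ← sum_fiberwise_of_maps_to fun c _ => hmaps c]
  refine sum_congr rfl fun k hk => ?_
  rw [sum_congr rfl fun c hc => by rw [(mem_filter.1 hc).2], sum_const, nsmul_eq_mul]
  have hcard := congrArg (Nat.cast (R := K)) (card_partCounts_mul (mem_filter.1 hk).2)
  push_cast at hcard
  rw [← hcard]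
  have hA : (∏ i : Fin n, ((i.val + 1)! : K) ^ k i) ≠ 0 :=
    prod_ne_zero_iff.2 fun i _ => pow_ne_zero _ (Nat.cast_ne_zero.2 (Nat.factorial_ne_zero _))
  have hB : (∏ i, ((k i)! : K)) ≠ 0 :=
    prod_ne_zero_iff.2 fun i _ => Nat.cast_ne_zero.2 (Nat.factorial_ne_zero _)
  simp_rw [div_pow, prod_div_distrib]
  push_cast
  field_simp

end OrderedFinpartition

theorem faa_di_bruno_general (n : ℕ) (F G : ℝ → ℝ) (x : ℝ)
    (hF : ContDiffAt ℝ n F x) (hG : ContDiffAt ℝ n G (F x)) :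
    iteratedDeriv n (G ∘ F) x =
      ∑ k ∈ (Fintype.piFinset fun _ : Fin n => Finset.range (n + 1)).filter
          (fun k : Fin n → ℕ => ∑ i, (i.1 + 1) * k i = n),
        ((n ! : ℝ) / ((∏ i, (k i)! : ℕ) : ℝ)) *
          iteratedDeriv (∑ i, k i) G (F x) *
          ∏ i, (iteratedDeriv (i.1 + 1) F x / ((i.1 + 1)! : ℝ)) ^ k i := by
  rw [iteratedDeriv_comp_eq_sum_orderedFinpartition hG hF le_rfl]
  exact OrderedFinpartition.sum_eq_sum_partCounts (fun r => iteratedDeriv r G (F x))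
    (fun s => iteratedDeriv s F x)

/-- **Faà di Bruno's formula.** If `F` is `n` times continuously differentiable near `x`
and `G` is `n` times continuously differentiable near `F x`, then the `n`-th derivative
of `G ∘ F` at `x` is given by the sum, over all tuples `(k₁, …, kₙ)` of nonnegative
integers with `k₁ + 2k₂ + ⋯ + n·kₙ = n`, of
`(n! / (k₁!⋯kₙ!)) · G⁽ʳ⁾(F x) · ∏ᵢ (F⁽ⁱ⁾(x)/i!)^{kᵢ}` where `r = k₁ + ⋯ + kₙ`. -/
theorem faa_di_bruno (n : ℕ) (hn : 0 < n) (F G : ℝ → ℝ) (x : ℝ)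
    (hF : ContDiffAt ℝ n F x) (hG : ContDiffAt ℝ n G (F x)) :
    iteratedDeriv n (G ∘ F) x =
      ∑ k ∈ (Fintype.piFinset fun _ : Fin n => Finset.range (n + 1)).filter
          (fun k : Fin n → ℕ => ∑ i, (i.1 + 1) * k i = n),
        ((n ! : ℝ) / ((∏ i, (k i)! : ℕ) : ℝ)) *
          iteratedDeriv (∑ i, k i) G (F x) *
          ∏ i, (iteratedDeriv (i.1 + 1) F x / ((i.1 + 1)! : ℝ)) ^ k i :=
  faa_di_bruno_general n F G x hF hG
end

section
/- Let R be a commutative ℚ-algebra, and let F, G be formal power series over R with coefficients f_m = coeff_m(F) and g_m = coeff_m(G), where the constant coefficient of F is zero (f₀ = 0). Then for every n ≥ 1, the n-th coefficient of the composition G ∘ F (substitution of F into G) equals Σ (multinomial coefficient (k₁+⋯+k_n)!/(k₁!···k_n!)) · g_{k₁+⋯+k_n} · ∏_{i=1}^{n} f_i^{k_i}, where the sum ranges over all tuples (k₁,…,k_n) of nonnegative integers with k₁ + 2k₂ + ⋯ + n·k_n = n. -/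
/-!
Since `F` has no constant term, the `n`-th coefficient of `F ^ m` only sees the polynomial
`f₁ X + ⋯ + fₙ Xⁿ`. The multinomial theorem expands its `m`-th power as a sum over tuples
`(k₁, …, kₙ)` with `k₁ + ⋯ + kₙ = m`, and the coefficient of `Xⁿ` keeps exactly those of weight
`k₁ + 2k₂ + ⋯ + n kₙ = n`. Summing `gₘ` times these over `m` regroups the weight-`n` tuples
according to `m = k₁ + ⋯ + kₙ`.
-/

/-- The composition (substitution) `G ∘ F` of formal power series: substituting `F` into
`G`.  When the constant coefficient of `F` vanishes, the coefficient of `Xⁿ` in `G ∘ F`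
is the (finite) sum `∑_{k ≤ n} gₖ · coeff n (Fᵏ)`, since `Fᵏ` has order at least `k`. -/
noncomputable def PowerSeries.comp {R : Type*} [CommRing R] (G F : PowerSeries R) :
    PowerSeries R :=
  PowerSeries.mk fun n =>
    ∑ k ∈ Finset.range (n + 1), PowerSeries.coeff k G * PowerSeries.coeff n (F ^ k)

open Finset

namespace PowerSeries

variable {R : Type*} [CommRing R]

theorem coeff_pow_eq_of_coeff_eq {A B : R⟦X⟧} {n : ℕ} (h : ∀ j ≤ n, coeff j A = coeff j B)
    (m : ℕ) : coeff n (A ^ m) = coeff n (B ^ m) := by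
  have htrunc : trunc (n + 1) A = trunc (n + 1) B := Polynomial.ext fun j => by
    simp only [coeff_trunc, Nat.lt_succ_iff]
    split_ifs with hj
    exacts [h j hj, rfl]
  have hcoeff (φ : R⟦X⟧) : coeff n φ = (trunc (n + 1) φ).coeff n := by
    rw [coeff_trunc, if_pos n.lt_succ_self]
  rw [hcoeff, ← trunc_trunc_pow, htrunc, trunc_trunc_pow, ← hcoeff]

theorem coeff_sum_C_mul_X_pow_pow {ι : Type*} [Fintype ι] [DecidableEq ι] (c : ι → R)
    (d : ι → ℕ) (n m : ℕ) :
    coeff n ((∑ i, C (c i) * X ^ d i) ^ m) =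
      ∑ k ∈ piAntidiag univ m with ∑ i, d i * k i = n,
        (Nat.multinomial univ k : R) * ∏ i, c i ^ k i := by
  have hprod (k : ι → ℕ) : ∏ i, (C (c i) * X ^ d i) ^ k i =
      C (∏ i, c i ^ k i) * (X : R⟦X⟧) ^ ∑ i, d i * k i := by
    simp_rw [mul_pow, ← pow_mul, prod_mul_distrib, ← map_pow, ← map_prod, prod_pow_eq_pow_sum]
  rw [sum_pow_eq_sum_piAntidiag, map_sum, sum_filter]
  refine sum_congr rfl fun k _ => ?_
  rw [hprod, ← map_natCast (C (R := R)), ← mul_assoc, ← map_mul, coeff_C_mul_X_pow]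
  simp only [eq_comm]

theorem coeff_eq_coeff_sum_C_coeff_mul_X_pow {F : R⟦X⟧} (hF : coeff 0 F = 0) {n j : ℕ}
    (hj : j ≤ n) :
    coeff j F = coeff j (∑ i : Fin n, C (coeff (i.1 + 1) F) * X ^ (i.1 + 1)) := by
  simp only [map_sum, coeff_C_mul_X_pow]
  rw [Fin.sum_univ_eq_sum_range (fun i => if j = i + 1 then coeff (i + 1) F else 0)]
  rcases j with _ | j
  · simp [hF]
  · simp only [Nat.add_right_cancel_iff]
    rw [sum_ite_eq, if_pos (mem_range.2 hj)]

theorem coeff_pow_eq_sum_multinomial {F : R⟦X⟧} (hF : coeff 0 F = 0) (n m : ℕ) :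
    coeff n (F ^ m) =
      ∑ k ∈ piAntidiag univ m with ∑ i : Fin n, (i.1 + 1) * k i = n,
        (Nat.multinomial univ k : R) * ∏ i, coeff (i.1 + 1) F ^ k i := by
  rw [coeff_pow_eq_of_coeff_eq fun j hj => coeff_eq_coeff_sum_C_coeff_mul_X_pow hF hj,
    coeff_sum_C_mul_X_pow_pow]

end PowerSeries

theorem sum_le_of_sum_succ_mul_eq {n : ℕ} {k : Fin n → ℕ} (hk : ∑ i, (i.1 + 1) * k i = n) :
    ∑ i, k i ≤ n :=
  calc ∑ i, k i ≤ ∑ i : Fin n, (i.1 + 1) * k i :=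
        sum_le_sum fun i _ => Nat.le_mul_of_pos_left _ i.1.succ_pos
    _ = n := hk

theorem mem_piFinset_range_of_sum_succ_mul_eq {n : ℕ} {k : Fin n → ℕ}
    (hk : ∑ i, (i.1 + 1) * k i = n) : k ∈ Fintype.piFinset fun _ => range (n + 1) :=
  Fintype.mem_piFinset.2 fun i => mem_range_succ_iff.2 <|
    (single_le_sum (fun _ _ => Nat.zero_le _) (mem_univ i)).trans (sum_le_of_sum_succ_mul_eq hk)

theorem coeff_comp_eq_sum_multinomial_general {R : Type*} [CommRing R]
    (F G : PowerSeries R) (hF : PowerSeries.coeff 0 F = 0) (n : ℕ) :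
    PowerSeries.coeff n (PowerSeries.comp G F) =
      ∑ k ∈ (Fintype.piFinset fun _ : Fin n => Finset.range (n + 1)).filter
          (fun k : Fin n → ℕ => ∑ i, (i.1 + 1) * k i = n),
        (Nat.multinomial Finset.univ k : R) *
          PowerSeries.coeff (∑ i, k i) G *
          ∏ i, PowerSeries.coeff (i.1 + 1) F ^ k i := by
  set S := (Fintype.piFinset fun _ : Fin n => range (n + 1)).filter
    fun k : Fin n → ℕ => ∑ i, (i.1 + 1) * k i = n
  have hfiber (m : ℕ) :
      {k ∈ piAntidiag (univ : Finset (Fin n)) m | ∑ i, (i.1 + 1) * k i = n} =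
        {k ∈ S | ∑ i, k i = m} := by
    ext k
    simp only [S, mem_filter, mem_piAntidiag, mem_univ, implies_true, and_true]
    exact ⟨fun ⟨hm, hk⟩ => ⟨⟨mem_piFinset_range_of_sum_succ_mul_eq hk, hk⟩, hm⟩,
      fun ⟨⟨_, hk⟩, hm⟩ => ⟨hm, hk⟩⟩
  have hmaps : ∀ k ∈ S, ∑ i, k i ∈ range (n + 1) := fun k hk =>
    mem_range_succ_iff.2 (sum_le_of_sum_succ_mul_eq (mem_filter.1 hk).2)
  rw [PowerSeries.comp, PowerSeries.coeff_mk, ← sum_fiberwise_of_maps_to hmaps]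
  refine sum_congr rfl fun m _ => ?_
  rw [PowerSeries.coeff_pow_eq_sum_multinomial hF, hfiber, mul_sum]
  refine sum_congr rfl fun k hk => ?_
  rw [(mem_filter.1 hk).2]
  ring

/-- For formal power series `F, G` over a commutative `ℚ`-algebra `R`, with the constant
coefficient of `F` equal to zero, the `n`-th coefficient (`n ≥ 1`) of the composition
`G ∘ F` equals the sum, over all tuples `(k₁, …, kₙ)` of nonnegative integers with
`k₁ + 2k₂ + ⋯ + n·kₙ = n`, of the multinomial coefficient `(k₁+⋯+kₙ)!/(k₁!⋯kₙ!)` times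
`g_{k₁+⋯+kₙ} · ∏ᵢ fᵢ^{kᵢ}`. -/
theorem coeff_comp_eq_sum_multinomial {R : Type*} [CommRing R] [Algebra ℚ R]
    (F G : PowerSeries R) (hF : PowerSeries.coeff 0 F = 0) (n : ℕ) (hn : 1 ≤ n) :
    PowerSeries.coeff n (PowerSeries.comp G F) =
      ∑ k ∈ (Fintype.piFinset fun _ : Fin n => Finset.range (n + 1)).filter
          (fun k : Fin n → ℕ => ∑ i, (i.1 + 1) * k i = n),
        (Nat.multinomial Finset.univ k : R) *
          PowerSeries.coeff (∑ i, k i) G *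
          ∏ i, PowerSeries.coeff (i.1 + 1) F ^ k i :=
  coeff_comp_eq_sum_multinomial_general F G hF n
end
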